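/- arXiv:1811.12694 — 2 statements merged into one kernel-verified Lean document; each statement's English description precedes it below -/
import Mathlib

section
/- Let X be a locally finite, infinite, connected graph with basepoint b and divergence function D(n) = Div_{X,γ,δ}(n) for some constants 0 < δ < 1 and γ ≥ 0, and let f be a Floyd function satisfying limsup_{n→∞} ( D(2n) · f(⌊δn − γ⌋) ) = 0. Then the Floyd boundary ∂_f X consists of exactly one point. -/
open Filter
open scoped ENNReal

universe u

namespace FloydPaper

/-- A **Floyd function**: `f : {1,2,...} → (0,∞)` (modelled as `f : ℕ → ℝ` with `f 0 := f 1`)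
such that there is `K ≥ 1` with `1 ≤ f n / f (n+1) ≤ K` for all `n ≥ 1`, and `∑ f n < ∞`. -/
structure IsFloydFunction (f : ℕ → ℝ) : Prop where
  pos : ∀ n : ℕ, 0 < f n
  zero_eq : f 0 = f 1
  ratio : ∃ K : ℝ, 1 ≤ K ∧ ∀ n : ℕ, 1 ≤ n → 1 ≤ f n / f (n + 1) ∧ f n / f (n + 1) ≤ K
  summable : Summable fun n : ℕ => f (n + 1)

variable {V : Type u}

/-- The Floyd length of an (oriented) edge: `f` applied to the graph distance from the
basepoint `b` to the nearer endpoint of the edge. -/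
noncomputable def edgeFloydLength (G : SimpleGraph V) (f : ℕ → ℝ) (b : V) (e : G.Dart) : ℝ :=
  f (min (G.dist b e.toProd.1) (G.dist b e.toProd.2))

/-- The Floyd length of an edge path (walk): the sum of the Floyd lengths of its edges. -/
noncomputable def floydLength (G : SimpleGraph V) (f : ℕ → ℝ) (b : V) {u v : V}
    (p : G.Walk u v) : ℝ :=
  (p.darts.map (edgeFloydLength G f b)).sum

/-- The Floyd distance between two vertices: the infimum of the Floyd lengths of edge paths
joining them. -/
noncomputable def floydDist (G : SimpleGraph V) (f : ℕ → ℝ) (b : V) (u v : V) : ℝ :=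
  sInf {L : ℝ | ∃ p : G.Walk u v, floydLength G f b p = L}

/-- An edge path `p` is a `C`-quasi-geodesic if for all vertices `v, v'` on `p`,
`(1/C) d(v,v') - C ≤ |p(v,v')| ≤ C d(v,v') + C`, where `|p(v,v')|` is the number of edges of
the subpath of `p` between them. -/
def IsQuasiGeodesicWalk (G : SimpleGraph V) (C : ℝ) {u v : V} (p : G.Walk u v) : Prop :=
  ∀ i j : ℕ, i ≤ j → j ≤ p.length →
    (1 / C) * (G.dist (p.getVert i) (p.getVert j) : ℝ) - C ≤ ((j : ℝ) - (i : ℝ)) ∧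
      ((j : ℝ) - (i : ℝ)) ≤ C * (G.dist (p.getVert i) (p.getVert j) : ℝ) + C

/-- A sequence of vertices escapes to infinity if it eventually leaves every ball about the
basepoint. -/
def Escapes (G : SimpleGraph V) (b : V) (s : ℕ → V) : Prop :=
  ∀ n : ℕ, ∃ N : ℕ, ∀ m : ℕ, N ≤ m → n < G.dist b (s m)

/-- A sequence of vertices is Cauchy for the Floyd distance. -/
def IsFloydCauchy (G : SimpleGraph V) (f : ℕ → ℝ) (b : V) (s : ℕ → V) : Prop :=
  ∀ ε : ℝ, 0 < ε → ∃ N : ℕ, ∀ m n : ℕ, N ≤ m → N ≤ n →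
    floydDist G f b (s m) (s n) < ε

/-- The sequences representing points of the Floyd boundary: Floyd-Cauchy sequences escaping
to infinity (for an infinite, connected, locally finite graph these are exactly the Cauchy
sequences with no limit in the vertex set, since vertices are isolated in the Floyd metric). -/
def BoundarySeq (G : SimpleGraph V) (f : ℕ → ℝ) (b : V) : Type u :=
  {s : ℕ → V // IsFloydCauchy G f b s ∧ Escapes G b s}

/-- Two boundary sequences represent the same boundary point iff the Floyd distance between
them tends to `0`. -/
def BoundaryRel (G : SimpleGraph V) (f : ℕ → ℝ) (b : V)
    (s t : BoundarySeq G f b) : Prop :=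
  Tendsto (fun n => floydDist G f b (s.1 n) (t.1 n)) atTop (nhds 0)

/-- The Floyd boundary `∂_f X`: the set of points of the Cauchy completion of the vertex set
with the Floyd metric which do not lie in the vertex set. -/
def FloydBoundary (G : SimpleGraph V) (f : ℕ → ℝ) (b : V) : Type u :=
  Quot (BoundaryRel G f b)

/-- The Floyd boundary consists of exactly one point. -/
def FloydBoundaryOnePoint (G : SimpleGraph V) (f : ℕ → ℝ) (b : V) : Prop :=
  ∃ p : FloydBoundary G f b, ∀ q : FloydBoundary G f b, q = p

/-- The Floyd boundary is trivial: it has at most two points. -/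
def FloydBoundaryTrivial (G : SimpleGraph V) (f : ℕ → ℝ) (b : V) : Prop :=
  ∀ p q r : FloydBoundary G f b, p = q ∨ p = r ∨ q = r

/-- The divergence function `Div_{X,γ,δ}(n)` of a graph: the sup over triples `x, y, c` of
vertices with `r := d(c,{x,y}) > 0` and `d(x,y) ≤ n` of the infimum of the lengths of edge
paths from `x` to `y` avoiding the ball of radius `δr - γ` about `c` (`∞` if none exists). -/
noncomputable def graphDivergence (G : SimpleGraph V) (γ δ : ℝ) (n : ℕ) : ℝ≥0∞ :=
  ⨆ x : V, ⨆ y : V, ⨆ c : V,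
    ⨆ _ : 0 < min (G.dist c x) (G.dist c y) ∧ G.dist x y ≤ n,
      ⨅ p : {p : G.Walk x y // ∀ z ∈ p.support,
          δ * (↑(min (G.dist c x) (G.dist c y)) : ℝ) - γ < (G.dist c z : ℝ)},
        (p.1.length : ℝ≥0∞)

/-- `α : ℝ → X` is a (bi-infinite) `C`-quasi-geodesic for the distance function `d`. -/
def IsQuasiGeodesicMap {X : Type u} (d : X → X → ℝ) (C : ℝ) (α : ℝ → X) : Prop :=
  ∀ s t : ℝ, (1 / C) * |s - t| - C ≤ d (α s) (α t) ∧ d (α s) (α t) ≤ C * |s - t| + C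

/-- `α : [0,∞) → X` is a `C`-quasi-geodesic ray for the distance function `d`. -/
def IsQuasiGeodesicRay {X : Type u} (d : X → X → ℝ) (C : ℝ) (α : ℝ → X) : Prop :=
  ∀ s t : ℝ, 0 ≤ s → 0 ≤ t →
    (1 / C) * |s - t| - C ≤ d (α s) (α t) ∧ d (α s) (α t) ≤ C * |s - t| + C

/-- The length of a discrete path (chain) in a space with distance function `d`. -/
noncomputable def chainLength {X : Type u} (d : X → X → ℝ) (p : List X) : ℝ :=
  ((p.zip p.tail).map fun q => d q.1 q.2).sum

/-- The divergence function of a metric space (with distance function `d`), where paths are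
taken to be discrete paths with steps of size at most `1` (for a graph these correspond to
edge paths). -/
noncomputable def divergence {X : Type u} (d : X → X → ℝ) (γ δ : ℝ) (n : ℕ) : ℝ≥0∞ :=
  ⨆ x : X, ⨆ y : X, ⨆ c : X,
    ⨆ _ : 0 < min (d c x) (d c y) ∧ d x y ≤ (n : ℝ),
      ⨅ p : {p : List X // p.Chain' (fun w z => d w z ≤ 1) ∧ p.head? = some x ∧
          p.getLast? = some y ∧ ∀ z ∈ p, δ * min (d c x) (d c y) - γ < d c z},
        ENNReal.ofReal (chainLength d p.1)

/-- A space is `C`-wide if every point is within `C` of a bi-infinite `C`-quasi-geodesic and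
its divergence is bounded above by a linear function for some `0 < δ < 1`, `γ ≥ 0`. -/
def IsWide (X : Type u) (d : X → X → ℝ) (C : ℝ) : Prop :=
  (∀ x : X, ∃ α : ℝ → X, IsQuasiGeodesicMap d C α ∧ ∃ t : ℝ, d x (α t) ≤ C) ∧
  ∃ δ γ : ℝ, 0 < δ ∧ δ < 1 ∧ 0 ≤ γ ∧
    ∃ A B : ℝ, ∀ n : ℕ, divergence d γ δ n ≤ ENNReal.ofReal (A * n + B)

/-- The induced distance function on a subset. -/
def restrictDist {X : Type u} (d : X → X → ℝ) (Y : Set X) : ↥Y → ↥Y → ℝ :=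
  fun a b => d a b

/-- A subset has infinite diameter. -/
def InfiniteDiam {X : Type u} (d : X → X → ℝ) (S : Set X) : Prop :=
  ∀ M : ℝ, ∃ x ∈ S, ∃ y ∈ S, M < d x y

/-- `X` is `C`-thick of order at most `k`: thick of order `0` means wide, and thick of order
at most `k+1` means there is a collection `𝒴` of subsets whose `C`-neighborhoods cover `X`,
each of which is `C`-thick of order at most `k` in the induced metric, and any two of which
are connected by a finite chain of members of `𝒴` with consecutive ones having
infinite-diameter intersection `N_C(Y_i) ∩ Y_{i+1}`. -/
def IsThickLE : ℕ → (X : Type u) → (X → X → ℝ) → ℝ → Prop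
  | 0, X, d, C => IsWide X d C
  | k + 1, X, d, C =>
      ∃ 𝒴 : Set (Set X),
        (∀ x : X, ∃ Y ∈ 𝒴, ∃ y ∈ Y, d x y ≤ C) ∧
        (∀ Y ∈ 𝒴, IsThickLE k ↥Y (restrictDist d Y) C) ∧
        ∀ Y ∈ 𝒴, ∀ Y' ∈ 𝒴, ∃ m : ℕ, ∃ c : Fin (m + 1) → Set X,
          (∀ i, c i ∈ 𝒴) ∧ c 0 = Y ∧ c (Fin.last m) = Y' ∧
          ∀ i : Fin m, InfiniteDiam d
            ({x : X | ∃ y ∈ c i.castSucc, d x y ≤ C} ∩ c i.succ)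

/-- `X` is `C`-thick of order at most `k ≥ 1` **with respect to** the collection `𝒴`. -/
def IsThickCollection (X : Type u) (d : X → X → ℝ) (C : ℝ) (k : ℕ) (𝒴 : Set (Set X)) : Prop :=
  (∀ x : X, ∃ Y ∈ 𝒴, ∃ y ∈ Y, d x y ≤ C) ∧
  (∀ Y ∈ 𝒴, IsThickLE (k - 1) ↥Y (restrictDist d Y) C) ∧
  ∀ Y ∈ 𝒴, ∀ Y' ∈ 𝒴, ∃ m : ℕ, ∃ c : Fin (m + 1) → Set X,
    (∀ i, c i ∈ 𝒴) ∧ c 0 = Y ∧ c (Fin.last m) = Y' ∧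
    ∀ i : Fin m, InfiniteDiam d
      ({x : X | ∃ y ∈ c i.castSucc, d x y ≤ C} ∩ c i.succ)

/-- The path metric of a graph, as a real-valued distance function on the vertices. -/
noncomputable def graphDist (G : SimpleGraph V) : V → V → ℝ :=
  fun x y => (G.dist x y : ℝ)

/-- The Cayley graph of a group with respect to a generating set `S`: vertices are group
elements, with an edge joining `g` and `g * s` for each `g` and each `s ∈ S \ {1}`. -/
def cayleyGraph (Γ : Type u) [Group Γ] (S : Set Γ) : SimpleGraph Γ :=
  SimpleGraph.fromRel fun g h => ∃ s ∈ S, h = g * s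

section Aux

open SimpleGraph

variable {G : SimpleGraph V} {f : ℕ → ℝ} {b : V}

lemma IsFloydFunction.antitone (hf : IsFloydFunction f) : Antitone f := by
  apply antitone_nat_of_succ_le
  intro n
  rcases Nat.eq_zero_or_pos n with h | h
  · subst h; rw [hf.zero_eq]
  · obtain ⟨K, _, hK⟩ := hf.ratio
    have h2 := (hK n h).1
    have hp := hf.pos (n + 1)
    rw [le_div_iff₀ hp] at h2
    linarith

lemma floydLength_nonneg (hf : IsFloydFunction f) {u v : V} (p : G.Walk u v) :
    0 ≤ floydLength G f b p := by
  apply List.sum_nonneg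
  intro x hx
  rcases List.mem_map.mp hx with ⟨d, _, rfl⟩
  exact (hf.pos _).le

lemma floydDist_le_floydLength (hf : IsFloydFunction f) {u v : V} (p : G.Walk u v) :
    floydDist G f b u v ≤ floydLength G f b p := by
  apply csInf_le
  · refine ⟨0, fun L hL => ?_⟩
    obtain ⟨q, rfl⟩ := hL
    exact floydLength_nonneg hf q
  · exact ⟨p, rfl⟩

lemma floydDist_nonneg (hf : IsFloydFunction f) (hconn : G.Connected) (u v : V) :
    0 ≤ floydDist G f b u v := by
  obtain ⟨p⟩ := hconn u v
  refine le_csInf ⟨floydLength G f b p, p, rfl⟩ ?_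
  rintro L ⟨q, rfl⟩
  exact floydLength_nonneg hf q

lemma floydLength_append {u v w : V} (p : G.Walk u v) (q : G.Walk v w) :
    floydLength G f b (p.append q) = floydLength G f b p + floydLength G f b q := by
  simp [floydLength, Walk.darts_append]

lemma edgeFloydLength_symm (d : G.Dart) :
    edgeFloydLength G f b d.symm = edgeFloydLength G f b d := by
  simp [edgeFloydLength, SimpleGraph.Dart.symm, min_comm]

lemma floydLength_reverse {u v : V} (p : G.Walk u v) :
    floydLength G f b p.reverse = floydLength G f b p := by
  unfold floydLength
  rw [Walk.darts_reverse, List.map_reverse, List.sum_reverse, List.map_map]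
  congr 1
  apply List.map_congr_left
  intro d _
  exact edgeFloydLength_symm d

lemma dist_getVert_le (hconn : G.Connected) {u v : V} (p : G.Walk u v) (i : ℕ) :
    G.dist u (p.getVert i) ≤ i := by
  induction i with
  | zero => simp [Walk.getVert_zero]
  | succ i ih =>
    rcases le_or_gt p.length i with h | h
    · have h1 : p.getVert (i + 1) = p.getVert i := by
        rw [p.getVert_of_length_le h, p.getVert_of_length_le (h.trans (Nat.le_succ i))]
      rw [h1]; exact ih.trans (Nat.le_succ i)
    · have hadj := p.adj_getVert_succ h
      have h2 : G.dist (p.getVert i) (p.getVert (i + 1)) ≤ 1 := by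
        simpa using SimpleGraph.dist_le hadj.toWalk
      calc G.dist u (p.getVert (i + 1))
          ≤ G.dist u (p.getVert i) + G.dist (p.getVert i) (p.getVert (i + 1)) :=
            hconn.dist_triangle
        _ ≤ i + 1 := add_le_add ih h2

lemma exists_pred (hconn : G.Connected) {u : V} (h : 0 < G.dist b u) :
    ∃ w : V, G.Adj w u ∧ G.dist b w + 1 = G.dist b u := by
  obtain ⟨p, hp⟩ := (hconn b u).exists_walk_length_eq_dist
  set L := G.dist b u with hL
  have h1 : L - 1 < p.length := by omega
  have hadj : G.Adj (p.getVert (L - 1)) (p.getVert (L - 1 + 1)) := p.adj_getVert_succ h1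
  have h2 : p.getVert (L - 1 + 1) = u := by
    rw [show L - 1 + 1 = p.length by omega, p.getVert_length]
  rw [h2] at hadj
  refine ⟨p.getVert (L - 1), hadj, ?_⟩
  have hle : G.dist b (p.getVert (L - 1)) ≤ L - 1 := dist_getVert_le hconn p (L - 1)
  have hwu : G.dist (p.getVert (L - 1)) u ≤ 1 := by
    simpa using SimpleGraph.dist_le hadj.toWalk
  have hge : L ≤ G.dist b (p.getVert (L - 1)) + 1 :=
    le_trans hconn.dist_triangle (add_le_add le_rfl hwu)
  omega

lemma exists_radial (hconn : G.Connected) (hf : IsFloydFunction f) :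
    ∀ (L : ℕ) (u : V), G.dist b u = L → ∀ n, n ≤ L → ∃ u' : V, G.dist b u' = n ∧
      ∃ q : G.Walk u' u, floydLength G f b q ≤ ∑ k ∈ Finset.Ico n L, f k := by
  intro L
  induction L with
  | zero =>
    intro u hL n hn
    interval_cases n
    exact ⟨u, hL, Walk.nil, by simp [floydLength]⟩
  | succ L ih =>
    intro u hL n hn
    rcases Nat.lt_or_ge n (L + 1) with h | h
    · obtain ⟨w, hadj, hw⟩ := exists_pred hconn (b := b) (u := u) (by omega)
      have hwL : G.dist b w = L := by omega
      obtain ⟨u', hu', q, hq⟩ := ih w hwL n (by omega)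
      refine ⟨u', hu', q.append (Walk.cons hadj Walk.nil), ?_⟩
      rw [floydLength_append]
      have hedge : floydLength G f b (Walk.cons hadj Walk.nil) = f L := by
        simp only [floydLength, Walk.darts_cons, Walk.darts_nil, List.map_cons, List.map_nil,
          List.sum_cons, List.sum_nil, add_zero]
        simp [edgeFloydLength, hwL, hL, ]
      rw [hedge, Finset.sum_Ico_succ_top (by omega : n ≤ L)]
      linarith
    · have hn' : n = L + 1 := by omega
      subst hn'
      exact ⟨u, hL, Walk.nil, by simp [floydLength]⟩

lemma ball_finite (hconn : G.Connected) (hlf : ∀ v : V, (G.neighborSet v).Finite) (b : V) :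
    ∀ n : ℕ, {v : V | G.dist b v ≤ n}.Finite := by
  intro n
  induction n with
  | zero =>
    apply Set.Finite.subset (Set.finite_singleton b)
    intro v hv
    have h0 : G.dist b v = 0 := Nat.le_zero.mp hv
    have := (hconn.dist_eq_zero_iff).mp h0
    simp [this]
  | succ n ih =>
    apply Set.Finite.subset (ih.union (Set.Finite.biUnion ih fun w _ => hlf w))
    intro v hv
    rcases Nat.lt_or_ge n (G.dist b v) with h | h
    · obtain ⟨w, hadj, hw⟩ := exists_pred hconn (b := b) (u := v) (by omega)
      have hwn : G.dist b w ≤ n := by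
        have : G.dist b v ≤ n + 1 := hv
        omega
      exact Or.inr (Set.mem_biUnion hwn hadj)
    · exact Or.inl h

lemma floor_toNat_le {x : ℝ} {k : ℕ} (h : x ≤ (k : ℝ)) : (⌊x⌋).toNat ≤ k := by
  have h1 : ⌊x⌋ ≤ (k : ℤ) := by
    have := Int.floor_le_floor h
    simpa using this
  omega

end Aux
section Key

open SimpleGraph

variable {G : SimpleGraph V} {f : ℕ → ℝ} {b : V}

lemma sum_Ico_le_tail (hF : Summable f) (hfnn : ∀ k, 0 ≤ f k) (n L : ℕ) :
    ∑ k ∈ Finset.Ico n L, f k ≤ ∑' k : ℕ, f (k + n) := by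
  rw [Finset.sum_Ico_eq_sum_range]
  have hs : Summable fun k => f (k + n) := (summable_nat_add_iff n).mpr hF
  have h := Summable.sum_le_tsum (Finset.range (L - n)) (fun k _ => hfnn _) hs
  calc ∑ i ∈ Finset.range (L - n), f (n + i)
      = ∑ i ∈ Finset.range (L - n), f (i + n) := by
        apply Finset.sum_congr rfl; intro i _; rw [Nat.add_comm]
    _ ≤ _ := h

lemma key_lemma (G : SimpleGraph V) (hconn : G.Connected) (b : V)
    (γ δ : ℝ) (hδ0 : 0 < δ)
    (f : ℕ → ℝ) (hf : IsFloydFunction f)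
    (hlim : Filter.limsup
      (fun n : ℕ => graphDivergence G γ δ (2 * n) *
        ENNReal.ofReal (f (Int.toNat ⌊δ * (n : ℝ) - γ⌋))) Filter.atTop = 0)
    {e : ℝ} (he : 0 < e) :
    ∃ N : ℕ, 1 ≤ N ∧ ∀ u v : V, N ≤ G.dist b u → N ≤ G.dist b v →
      floydDist G f b u v < e := by
  have hF : Summable f := (summable_nat_add_iff 1).mp hf.summable
  have hanti := hf.antitone
  have hfnn : ∀ k, 0 ≤ f k := fun k => (hf.pos k).le
  have he4 : (0 : ℝ) < e / 4 := by linarith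
  have htail : Tendsto (fun i : ℕ => ∑' k : ℕ, f (k + i)) atTop (nhds 0) :=
    tendsto_sum_nat_add f
  obtain ⟨N₁, hN₁⟩ := eventually_atTop.mp (htail.eventually_lt_const he4)
  obtain ⟨K, hK⟩ := eventually_atTop.mp ((hF.tendsto_atTop_zero).eventually_lt_const he4)
  obtain ⟨N₂, hN₂⟩ := exists_nat_ge ((K + γ) / δ)
  have hpos : (0 : ℝ≥0∞) < ENNReal.ofReal (e / 4) := ENNReal.ofReal_pos.mpr he4
  have hev : ∀ᶠ n in atTop, graphDivergence G γ δ (2 * n) *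
      ENNReal.ofReal (f (Int.toNat ⌊δ * (n : ℝ) - γ⌋)) < ENNReal.ofReal (e / 4) :=
    Filter.eventually_lt_of_limsup_lt (hlim ▸ hpos)
  obtain ⟨N₃, hN₃⟩ := eventually_atTop.mp hev
  set N := max (max N₁ N₃) (max (N₂ + 1) 1) with hNdef
  have hN1le : N₁ ≤ N := le_max_of_le_left (le_max_left _ _)
  have hN3le : N₃ ≤ N := le_max_of_le_left (le_max_right _ _)
  have hN2le : N₂ + 1 ≤ N := le_max_of_le_right (le_max_left _ _)
  have hNpos : 1 ≤ N := le_max_of_le_right (le_max_right _ _)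
  refine ⟨N, hNpos, ?_⟩
  intro u v hu hv
  set m := (⌊δ * (N : ℝ) - γ⌋).toNat with hm
  have hKm : K ≤ m := by
    have hNr : ((K : ℝ) + γ) / δ ≤ (N : ℝ) := by
      refine hN₂.trans ?_
      exact_mod_cast Nat.cast_le.mpr (by omega : N₂ ≤ N)
    have h1 : (K : ℝ) ≤ δ * (N : ℝ) - γ := by
      rw [div_le_iff₀ hδ0] at hNr
      nlinarith
    have h2 : (K : ℤ) ≤ ⌊δ * (N : ℝ) - γ⌋ := Int.le_floor.mpr (by exact_mod_cast h1)
    omega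
  have hfm : f m < e / 4 := lt_of_le_of_lt (hanti hKm) (hK K le_rfl)
  have hfm0 : 0 < f m := hf.pos m
  -- radial walks
  obtain ⟨u', hu'd, qu, hqu⟩ := exists_radial hconn hf (G.dist b u) u rfl N hu
  obtain ⟨v', hv'd, qv, hqv⟩ := exists_radial hconn hf (G.dist b v) v rfl N hv
  have htailu : floydLength G f b qu < e / 4 :=
    lt_of_le_of_lt (hqu.trans (sum_Ico_le_tail hF hfnn N _)) (hN₁ N hN1le)
  have htailv : floydLength G f b qv < e / 4 :=
    lt_of_le_of_lt (hqv.trans (sum_Ico_le_tail hF hfnn N _)) (hN₁ N hN1le)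
  -- divergence
  have hcond : 0 < min (G.dist b u') (G.dist b v') ∧ G.dist u' v' ≤ 2 * N := by
    constructor
    · rw [hu'd, hv'd, min_self]; omega
    · calc G.dist u' v' ≤ G.dist u' b + G.dist b v' := hconn.dist_triangle
        _ = N + N := by rw [SimpleGraph.dist_comm, hu'd, hv'd]
        _ = 2 * N := by omega
  have hDle : (⨅ p : {p : G.Walk u' v' // ∀ z ∈ p.support,
        δ * (↑(min (G.dist b u') (G.dist b v')) : ℝ) - γ < (G.dist b z : ℝ)},
      (p.1.length : ℝ≥0∞)) ≤ graphDivergence G γ δ (2 * N) := by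
    simp only [graphDivergence]
    refine le_iSup_of_le u' ?_
    refine le_iSup_of_le v' ?_
    refine le_iSup_of_le b ?_
    exact le_iSup_of_le hcond le_rfl
  have hsmall := hN₃ N hN3le
  have hofpos : ENNReal.ofReal (f m) ≠ 0 := (ENNReal.ofReal_pos.mpr hfm0).ne'
  have hDtop : graphDivergence G γ δ (2 * N) ≠ ⊤ := by
    intro h
    rw [h, ENNReal.top_mul hofpos] at hsmall
    exact absurd hsmall not_top_lt
  have hlt : (⨅ p : {p : G.Walk u' v' // ∀ z ∈ p.support,
        δ * (↑(min (G.dist b u') (G.dist b v')) : ℝ) - γ < (G.dist b z : ℝ)},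
      (p.1.length : ℝ≥0∞)) < graphDivergence G γ δ (2 * N) + 1 :=
    lt_of_le_of_lt hDle (ENNReal.lt_add_right hDtop one_ne_zero)
  obtain ⟨p, hp⟩ := iInf_lt_iff.mp hlt
  set D := graphDivergence G γ δ (2 * N) with hD
  have hlen : (p.1.length : ℝ) ≤ D.toReal + 1 := by
    have hne : D + 1 ≠ ⊤ := ENNReal.add_ne_top.mpr ⟨hDtop, ENNReal.one_ne_top⟩
    have h1 : ((p.1.length : ℝ≥0∞)).toReal ≤ (D + 1).toReal :=
      ENNReal.toReal_mono hne hp.le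
    rw [ENNReal.toReal_add hDtop ENNReal.one_ne_top] at h1
    simpa using h1
  have hedge : ∀ d ∈ p.1.darts, edgeFloydLength G f b d ≤ f m := by
    intro d hd
    have h1 := p.2 d.toProd.1 (Walk.dart_fst_mem_support_of_mem_darts _ hd)
    have h2 := p.2 d.toProd.2 (Walk.dart_snd_mem_support_of_mem_darts _ hd)
    rw [hu'd, hv'd, min_self] at h1 h2
    have hm1 : m ≤ G.dist b d.toProd.1 := floor_toNat_le h1.le
    have hm2 : m ≤ G.dist b d.toProd.2 := floor_toNat_le h2.le
    exact hanti (le_min hm1 hm2)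
  have hflp : floydLength G f b p.1 ≤ (p.1.length : ℝ) * f m := by
    have h := List.sum_le_card_nsmul (p.1.darts.map (edgeFloydLength G f b)) (f m) ?_
    · simpa [floydLength, Walk.length_darts, nsmul_eq_mul] using h
    · intro x hx
      rcases List.mem_map.mp hx with ⟨d, hd, rfl⟩
      exact hedge d hd
  have hDfm : D.toReal * f m ≤ e / 4 := by
    have h1 : (D * ENNReal.ofReal (f m)).toReal ≤ (ENNReal.ofReal (e / 4)).toReal :=
      ENNReal.toReal_mono ENNReal.ofReal_ne_top hsmall.le
    rw [ENNReal.toReal_mul, ENNReal.toReal_ofReal hfm0.le, ENNReal.toReal_ofReal he4.le] at h1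
    exact h1
  have hplen : floydLength G f b p.1 ≤ e / 4 + f m := by
    have h2 : (p.1.length : ℝ) * f m ≤ (D.toReal + 1) * f m :=
      mul_le_mul_of_nonneg_right hlen hfm0.le
    nlinarith
  have hW := floydDist_le_floydLength (G := G) (b := b) hf ((qu.reverse.append p.1).append qv)
  rw [floydLength_append, floydLength_append, floydLength_reverse] at hW
  calc floydDist G f b u v ≤ _ := hW
    _ < e := by linarith

end Key
/-- Let `X` be a locally finite, infinite, connected graph with basepoint `b` and divergence
function `D(n) = Div_{X,γ,δ}(n)` for some `0 < δ < 1`, `γ ≥ 0`, and let `f` be a Floyd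
function with `limsup_{n → ∞} D(2n) · f(⌊δn - γ⌋) = 0`. Then the Floyd boundary `∂_f X`
consists of exactly one point. -/
theorem floyd_boundary_one_point_of_divergence
    {V : Type u} (G : SimpleGraph V) (hinf : Infinite V) (hconn : G.Connected)
    (hlf : ∀ v : V, (G.neighborSet v).Finite) (b : V)
    (γ δ : ℝ) (hδ0 : 0 < δ) (hδ1 : δ < 1) (hγ : 0 ≤ γ)
    (f : ℕ → ℝ) (hf : IsFloydFunction f)
    (hlim : Filter.limsup
      (fun n : ℕ => graphDivergence G γ δ (2 * n) *
        ENNReal.ofReal (f (Int.toNat ⌊δ * (n : ℝ) - γ⌋))) Filter.atTop = 0) :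
    FloydBoundaryOnePoint G f b := by
  haveI := hinf
  have key : ∀ e : ℝ, 0 < e → ∃ N : ℕ, 1 ≤ N ∧ ∀ u v : V,
      N ≤ G.dist b u → N ≤ G.dist b v → floydDist G f b u v < e :=
    fun e he => key_lemma G hconn b γ δ hδ0 f hf hlim he
  have hsphere : ∀ n : ℕ, ∃ v : V, G.dist b v = n := by
    intro n
    have hfin := ball_finite hconn hlf b n
    obtain ⟨w, hw⟩ := hfin.infinite_compl.nonempty
    have hwn : n ≤ G.dist b w := by
      by_contra h
      exact hw (by simp only [Set.mem_setOf_eq]; omega)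
    obtain ⟨u', hu', _⟩ := exists_radial hconn hf (G.dist b w) w rfl n hwn
    exact ⟨u', hu'⟩
  choose s hs using hsphere
  have hesc : Escapes G b s := fun n => ⟨n + 1, fun m hm => by rw [hs m]; omega⟩
  have hcau : IsFloydCauchy G f b s := by
    intro ε hε
    obtain ⟨N, _, hN⟩ := key ε hε
    exact ⟨N, fun m n hm hn =>
      hN _ _ (by rw [hs m]; exact hm) (by rw [hs n]; exact hn)⟩
  refine ⟨Quot.mk _ ⟨s, hcau, hesc⟩, ?_⟩
  refine Quot.ind (fun t => ?_)
  apply Quot.sound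
  show Tendsto (fun n => floydDist G f b (t.1 n) (s n)) atTop (nhds 0)
  rw [Metric.tendsto_atTop]
  intro ε hε
  obtain ⟨N, hN1, hkey⟩ := key ε hε
  obtain ⟨M, hM⟩ := t.2.2 N
  refine ⟨max M N, fun n hn => ?_⟩
  have h1 : N ≤ G.dist b (t.1 n) := (hM n (le_trans (le_max_left _ _) hn)).le
  have h2 : N ≤ G.dist b (s n) := by rw [hs n]; exact le_trans (le_max_right _ _) hn
  rw [Real.dist_eq, sub_zero, abs_of_nonneg (floydDist_nonneg hf hconn _ _)]
  exact hkey _ _ h1 h2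

end FloydPaper
end

section
/- Let X be a metric space with basepoint b and let C ≥ 1 be such that every point of X is within distance C of (the image of) some bi-infinite C-quasi-geodesic. Then there exist constants K ≥ 2 and R ≥ 0, depending only on C, such that for every r > R and every point x ∈ X with d(b,x) ≥ r, there exists a C-quasi-geodesic ray β : [0,∞) → X with d(x, β(0)) ≤ C whose image is disjoint from the ball of radius r/(KC) about b. -/
open Filter
open scoped ENNReal

universe u

namespace FloydPaper

variable {V : Type u}

/-- Let `X` be a metric space with basepoint `b` in which every point is within distance `C`
of a bi-infinite `C`-quasi-geodesic (`C ≥ 1`). Then there are constants `K ≥ 2` and `R ≥ 0`,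
depending only on `C`, such that for every `r > R` and every `x` with `d(b,x) ≥ r` there is a
`C`-quasi-geodesic ray `β : [0,∞) → X` with `d(x, β 0) ≤ C` whose image avoids the ball of
radius `r/(KC)` about `b`. -/
theorem quasi_geodesic_ray_avoiding_ball (C : ℝ) (hC : 1 ≤ C) :
    ∃ K R : ℝ, 2 ≤ K ∧ 0 ≤ R ∧
      ∀ (X : Type u) [MetricSpace X] (b : X),
        (∀ x : X, ∃ α : ℝ → X,
            IsQuasiGeodesicMap (fun a a' => dist a a') C α ∧ ∃ t : ℝ, dist x (α t) ≤ C) →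
        ∀ r : ℝ, R < r → ∀ x : X, r ≤ dist b x →
          ∃ β : ℝ → X, IsQuasiGeodesicRay (fun a a' => dist a a') C β ∧
            dist x (β 0) ≤ C ∧ ∀ t : ℝ, 0 ≤ t → r / (K * C) ≤ dist b (β t) := by
  have hC0 : (0:ℝ) < C := lt_of_lt_of_le one_pos hC
  refine ⟨4 * C, 4 * C + C ^ 3, by nlinarith, by nlinarith [pow_pos hC0 3], ?_⟩
  intro X _ b hX r hr x hx
  obtain ⟨α, hα, t₀, ht₀⟩ := hX x
  by_cases hpos : ∀ s : ℝ, 0 ≤ s → r / (4 * C * C) ≤ dist b (α (t₀ + s))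
  · refine ⟨fun t => α (t₀ + t), ?_, ?_, ?_⟩
    · intro s t hs ht
      have habs : |t₀ + s - (t₀ + t)| = |s - t| := by
        rw [show t₀ + s - (t₀ + t) = s - t by ring]
      simpa [habs] using hα (t₀ + s) (t₀ + t)
    · simpa using ht₀
    · intro t ht0
      simpa using hpos t ht0
  · by_cases hneg : ∀ s : ℝ, 0 ≤ s → r / (4 * C * C) ≤ dist b (α (t₀ - s))
    · refine ⟨fun t => α (t₀ - t), ?_, ?_, ?_⟩
      · intro s t hs ht
        have habs : |t₀ - s - (t₀ - t)| = |s - t| := by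
          rw [show t₀ - s - (t₀ - t) = -(s - t) by ring, abs_neg]
        have h := hα (t₀ - s) (t₀ - t)
        rw [habs] at h
        exact h
      · simpa using ht₀
      · intro t ht0
        simpa using hneg t ht0
    · exfalso
      push_neg at hpos hneg
      obtain ⟨s, hs, hd1⟩ := hpos
      obtain ⟨s', hs', hd2⟩ := hneg
      set D : ℝ := r / (4 * C * C) with hDdef
      set d1 : ℝ := dist b (α (t₀ + s)) with hd1def
      set d2 : ℝ := dist b (α (t₀ - s')) with hd2def
      have hD4 : D * (4 * C * C) = r := by
        rw [hDdef]; field_simp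
      have hDpos : 0 ≤ D := le_of_lt (lt_of_le_of_lt dist_nonneg hd1)
      -- lower quasi-geodesic bound between the two close points
      have hlow := (hα (t₀ + s) (t₀ - s')).1
      have habs : |t₀ + s - (t₀ - s')| = s + s' := by
        rw [show t₀ + s - (t₀ - s') = s + s' by ring, abs_of_nonneg (by linarith)]
      rw [habs] at hlow
      set d12 : ℝ := dist (α (t₀ + s)) (α (t₀ - s')) with hd12def
      have hsum : s + s' ≤ C * (d12 + C) := by
        have h2 : 1 / C * (s + s') ≤ d12 + C := by linarith
        have h3 := mul_le_mul_of_nonneg_left h2 hC0.le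
        have h4 : C * (1 / C * (s + s')) = s + s' := by field_simp
        linarith [h3, h4.ge, h4.le]
      have hd12 : d12 ≤ d1 + d2 := by
        rw [hd12def, hd1def, hd2def, dist_comm b (α (t₀ + s))]
        exact dist_triangle _ _ _
      have key : s + s' < 2 * C * D + C * C := by
        nlinarith [mul_lt_mul_of_pos_left (show d12 < 2 * D by linarith) hC0]
      -- each of s, s' is large
      have hup1 := (hα (t₀ + s) t₀).2
      have habs1 : |t₀ + s - t₀| = s := by
        rw [show t₀ + s - t₀ = s by ring, abs_of_nonneg hs]
      rw [habs1] at hup1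
      have hup2 := (hα (t₀ - s') t₀).2
      have habs2 : |t₀ - s' - t₀| = s' := by
        rw [show t₀ - s' - t₀ = -s' by ring, abs_neg, abs_of_nonneg hs']
      rw [habs2] at hup2
      have hT : r - C ≤ dist b (α t₀) := by
        have h1 := dist_triangle b (α t₀) x
        have h2 : dist (α t₀) x ≤ C := by rw [dist_comm]; exact ht₀
        linarith
      have hT1 : dist b (α t₀) ≤ d1 + (C * s + C) := by
        have h1 := dist_triangle b (α (t₀ + s)) (α t₀)
        linarith
      have hT2 : dist b (α t₀) ≤ d2 + (C * s' + C) := by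
        have h1 := dist_triangle b (α (t₀ - s')) (α t₀)
        linarith
      have hbig1 : r - 2 * C - D < C * s := by linarith
      have hbig2 : r - 2 * C - D < C * s' := by linarith
      have key3 : C * (s + s') < 2 * C * C * D + C * C * C := by
        have h := mul_lt_mul_of_pos_left key hC0
        ring_nf at h ⊢
        linarith
      have h4D : 4 * D ≤ r := by
        have h := mul_nonneg hDpos (show (0:ℝ) ≤ C * C - 1 by nlinarith)
        nlinarith [h, hD4]
      linarith [key3, hbig1, hbig2, hD4, h4D, hr]

end FloydPaper
end
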